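/- Let Expr be the inductive type of expression trees with constructors leaf (v : Fin 7 → ℚ), add (l r), sub (l r), mul (l r), div (l r), pow (n : ℤ) (t), sqrt (t), and func (t) (a dimensionless unary function such as sin, cos, log or exp), and let pdim : Expr → Option (Fin 7 → ℚ) be the partial forward dimension evaluation: pdim (leaf v) = some v; pdim (add l r) and pdim (sub l r) equal pdim l when pdim l and pdim r are both some and equal, and none otherwise; pdim (mul l r) = some (dl + dr) and pdim (div l r) = some (dl − dr) when pdim l = some dl and pdim r = some dr (none otherwise); pdim (pow n t) = some (n • d) and pdim (sqrt t) = some ((1/2) • d) when pdim t = some d; pdim (func t) = some 0 if pdim t = some 0 and none otherwise. Define the consistency predicate consistent : (Fin 7 → ℚ) → Expr → Prop inductively: consistent τ (leaf v) ↔ v = τ; consistent τ (add l r) ↔ consistent τ l ∧ consistent τ r, and likewise for sub; consistent τ (mul l r) ↔ ∃ τₗ τᵣ, τₗ + τᵣ = τ ∧ consistent τₗ l ∧ consistent τᵣ r; consistent τ (div l r) ↔ ∃ τₗ τᵣ, τₗ − τᵣ = τ ∧ consistent τₗ l ∧ consistent τᵣ r; consistent τ (pow n t) ↔ ∃ τ',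 n • τ' = τ ∧ consistent τ' t; consistent τ (sqrt t) ↔ consistent (2 • τ) t; consistent τ (func t) ↔ τ = 0 ∧ consistent 0 t. Then for every tree T and target τ, consistent τ T implies pdim T = some τ. That is, if semantic backpropagation assigns to every node a target dimension compatible with the backward rules and every leaf matches its assigned target, the forward evaluation of the tree is dimensionally valid and equals the root target. -/
import Mathlib


/-- Expression trees with dimension-labelled leaves (dimension vectors in
`ℚ^7`), the four arithmetic operations, integer powers, square roots, and
dimensionless unary functions (such as sin, cos, log, exp). -/
inductive PExpr : Type
  | leaf (v : Fin 7 → ℚ) : PExpr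
  | add (l r : PExpr) : PExpr
  | sub (l r : PExpr) : PExpr
  | mul (l r : PExpr) : PExpr
  | div (l r : PExpr) : PExpr
  | pow (n : ℤ) (t : PExpr) : PExpr
  | sqrt (t : PExpr) : PExpr
  | func (t : PExpr) : PExpr

/-- Partial forward dimension evaluation following the paper's forward rules:
addition/subtraction require equal operand dimensions and preserve them,
multiplication adds, division subtracts, the `n`-th power multiplies the
dimension by `n`, square root halves it, and transcendental unary functions
require and produce the zero (dimensionless) vector. -/
def PExpr.pdim : PExpr → Option (Fin 7 → ℚ)
  | .leaf v => some v
  | .add l r =>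
      match l.pdim, r.pdim with
      | some dl, some dr => if dl = dr then some dl else none
      | _, _ => none
  | .sub l r =>
      match l.pdim, r.pdim with
      | some dl, some dr => if dl = dr then some dl else none
      | _, _ => none
  | .mul l r =>
      match l.pdim, r.pdim with
      | some dl, some dr => some (dl + dr)
      | _, _ => none
  | .div l r =>
      match l.pdim, r.pdim with
      | some dl, some dr => some (dl - dr)
      | _, _ => none
  | .pow n t =>
      match t.pdim with
      | some d => some (n • d)
      | none => none
  | .sqrt t =>
      match t.pdim with
      | some d => some ((1 / 2 : ℚ) • d)
      | none => none
  | .func t =>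
      match t.pdim with
      | some d => if d = 0 then some 0 else none
      | none => none

/-- Semantic-backpropagation consistency: every node is assigned a target
dimension compatible with the backward rules, and every leaf matches its
assigned target. -/
inductive PExpr.consistent : (Fin 7 → ℚ) → PExpr → Prop
  | leaf (v : Fin 7 → ℚ) : PExpr.consistent v (.leaf v)
  | add {τ : Fin 7 → ℚ} {l r : PExpr} :
      PExpr.consistent τ l → PExpr.consistent τ r → PExpr.consistent τ (.add l r)
  | sub {τ : Fin 7 → ℚ} {l r : PExpr} :
      PExpr.consistent τ l → PExpr.consistent τ r → PExpr.consistent τ (.sub l r)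
  | mul {τ τₗ τᵣ : Fin 7 → ℚ} {l r : PExpr} :
      τₗ + τᵣ = τ → PExpr.consistent τₗ l → PExpr.consistent τᵣ r →
      PExpr.consistent τ (.mul l r)
  | div {τ τₗ τᵣ : Fin 7 → ℚ} {l r : PExpr} :
      τₗ - τᵣ = τ → PExpr.consistent τₗ l → PExpr.consistent τᵣ r →
      PExpr.consistent τ (.div l r)
  | pow {τ τ' : Fin 7 → ℚ} {t : PExpr} (n : ℤ) :
      n • τ' = τ → PExpr.consistent τ' t → PExpr.consistent τ (.pow n t)
  | sqrt {τ : Fin 7 → ℚ} {t : PExpr} :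
      PExpr.consistent ((2 : ℚ) • τ) t → PExpr.consistent τ (.sqrt t)
  | func {τ : Fin 7 → ℚ} {t : PExpr} :
      τ = 0 → PExpr.consistent 0 t → PExpr.consistent τ (.func t)

/-- If semantic backpropagation assigns to every node a target
dimension compatible with the backward rules and every leaf matches its
assigned target, then the forward evaluation of the tree is dimensionally
valid and equals the root target. -/
theorem consistent_implies_pdim_eq (T : PExpr) (τ : Fin 7 → ℚ)
    (h : PExpr.consistent τ T) : T.pdim = some τ := by
  induction h with
  | leaf v => rfl
  | add hl hr ihl ihr => simp [PExpr.pdim, ihl, ihr]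
  | sub hl hr ihl ihr => simp [PExpr.pdim, ihl, ihr]
  | mul heq hl hr ihl ihr => simp [PExpr.pdim, ihl, ihr, heq]
  | div heq hl hr ihl ihr => simp [PExpr.pdim, ihl, ihr, heq]
  | pow n heq ht iht => simp [PExpr.pdim, iht, heq]
  | sqrt ht iht => simp [PExpr.pdim, iht]
  | func heq ht iht => simp [PExpr.pdim, iht, heq]
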